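/- arXiv:1709.06413 — 5 statements merged into one kernel-verified Lean document; each statement's English description precedes it below -/
import Mathlib

section
/- Let ρ > 0 and define a_n = (n+1)^{-ρ} for n ≥ 0. Then the sequence (b_n) defined by b_0 = 1 and b_n = -∑_{k=1}^{n} a_k b_{n-k} for n ≥ 1 satisfies |b_n| ≤ (n+1)^{-ρ} for all n ≥ 0. -/
/-!
For a positive log-convex sequence `a` with convolution inverse `b`, Kaluza's argument
combines `a (n - 1)` times the recursion at `n` with `a n` times the recursion at `n - 1`:
the top-index terms cancel, every remaining coefficient `a n * a (k - 1) - a (n - 1) * a k`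
is nonnegative because the ratios `a k / a (k - 1)` increase, so `b n ≤ 0` for `n ≥ 1` by
strong induction. The recursion `b n = -a n - ∑_{0<k<n} a k * b (n - k)` then gives
`-a n ≤ b n`. The sequence `(n + 1) ^ (-ρ)` is log-convex because `n (n + 2) ≤ (n + 1) ^ 2`.
-/

open Finset

def IsLogConvex (a : ℕ → ℝ) : Prop :=
  ∀ n, a (n + 1) ^ 2 ≤ a n * a (n + 2)

namespace IsLogConvex

variable {a b : ℕ → ℝ}

/-- The ratios `a (k + 1) / a k` are nondecreasing, in cross-multiplied form. -/
lemma mul_le_mul_succ (hlog : IsLogConvex a) (hpos : ∀ n, 0 < a n) {k n : ℕ} (hkn : k ≤ n) :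
    a (k + 1) * a n ≤ a k * a (n + 1) := by
  induction n, hkn using Nat.le_induction with
  | base => rw [mul_comm]
  | succ n _ ih =>
    have hstep : a (k + 1) * a (n + 1) * a (n + 1) ≤ a k * a (n + 2) * a (n + 1) :=
      calc a (k + 1) * a (n + 1) * a (n + 1) = a (k + 1) * a (n + 1) ^ 2 := by ring
        _ ≤ a (k + 1) * (a n * a (n + 2)) := by gcongr; exacts [(hpos _).le, hlog n]
        _ = a (k + 1) * a n * a (n + 2) := by ring
        _ ≤ a k * a (n + 1) * a (n + 2) := by gcongr; exact (hpos _).le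
        _ = a k * a (n + 2) * a (n + 1) := by ring
    exact le_of_mul_le_mul_right hstep (hpos _)

/-- Kaluza's theorem. -/
theorem convInverse_nonpos (hlog : IsLogConvex a) (hpos : ∀ n, 0 < a n) (hb0 : 0 ≤ b 0)
    (hconv : ∀ n, 1 ≤ n → ∑ k ∈ range (n + 1), a k * b (n - k) = 0) :
    ∀ n, 1 ≤ n → b n ≤ 0 := by
  intro n hn
  induction n using Nat.strong_induction_on with
  | _ n ih =>
    obtain ⟨m, rfl⟩ | ⟨m, rfl⟩ : n = 1 ∨ ∃ m, n = m + 2 := by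
      rcases n with _ | _ | m <;> simp_all
    · have h1 := hconv 1 le_rfl
      simp only [sum_range_succ, range_one, sum_singleton] at h1
      have : a 0 * b 1 ≤ 0 := by nlinarith [hpos 1]
      exact nonpos_of_mul_nonpos_right this (hpos 0)
    · have hprev := hconv (m + 1) (by omega)
      have hcur : a 0 * b (m + 2) + ∑ j ∈ range (m + 2), a (j + 1) * b (m + 1 - j) = 0 := by
        rw [← hconv (m + 2) (by omega), sum_range_succ' _ (m + 2), add_comm]
        simp
      have key : a (m + 1) * a 0 * b (m + 2) =
          ∑ j ∈ range (m + 2), (a (m + 2) * a j - a (m + 1) * a (j + 1)) * b (m + 1 - j) := by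
        simp only [sub_mul, sum_sub_distrib, mul_assoc, ← mul_sum]
        linear_combination a (m + 1) * hcur - a (m + 2) * hprev
      have hsum : ∑ j ∈ range (m + 2), (a (m + 2) * a j - a (m + 1) * a (j + 1)) * b (m + 1 - j)
          ≤ 0 := by
        rw [sum_range_succ, mul_comm (a (m + 2)), sub_self, zero_mul, add_zero]
        refine sum_nonpos fun j hj => mul_nonpos_of_nonneg_of_nonpos ?_ ?_
        · have := hlog.mul_le_mul_succ hpos (k := j) (n := m + 1) (by grind)
          linarith
        · exact ih _ (by omega) (by grind)
      exact nonpos_of_mul_nonpos_right (key ▸ hsum) (mul_pos (hpos _) (hpos _))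

theorem abs_convInverse_le (hlog : IsLogConvex a) (hpos : ∀ n, 0 < a n) (ha0 : a 0 = 1)
    (hb0 : b 0 = 1) (hconv : ∀ n, 1 ≤ n → ∑ k ∈ range (n + 1), a k * b (n - k) = 0) (n : ℕ) :
    |b n| ≤ a n := by
  have hnonpos := hlog.convInverse_nonpos hpos (hb0 ▸ zero_le_one) hconv
  obtain _ | m := n
  · simp [ha0, hb0]
  rw [abs_le]
  refine ⟨?_, (hnonpos _ (by omega)).trans (hpos _).le⟩
  have h := hconv (m + 1) (by omega)
  rw [sum_range_succ', sum_range_succ] at h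
  simp only [ha0, hb0, Nat.sub_self, Nat.add_sub_add_right, Nat.sub_zero, one_mul, mul_one] at h
  have hrest : ∑ j ∈ range m, a (j + 1) * b (m - j) ≤ 0 :=
    sum_nonpos fun j hj => mul_nonpos_of_nonneg_of_nonpos (hpos _).le
      (hnonpos _ (by grind))
  linarith

end IsLogConvex

lemma isLogConvex_rpow_neg {ρ : ℝ} (hρ : 0 ≤ ρ) :
    IsLogConvex fun n : ℕ => ((n : ℝ) + 1) ^ (-ρ) := by
  intro n
  push_cast
  rw [sq, ← Real.mul_rpow (by positivity) (by positivity),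
    ← Real.mul_rpow (by positivity) (by positivity)]
  exact Real.rpow_le_rpow_of_nonpos (by positivity) (by nlinarith) (neg_nonpos.mpr hρ)

theorem stmt6 (ρ : ℝ) (hρ : 0 < ρ) (b : ℕ → ℝ)
    (hb0 : b 0 = 1)
    (hbn : ∀ n : ℕ, 1 ≤ n →
      b n = -∑ k ∈ Finset.Icc 1 n, ((k : ℝ) + 1) ^ (-ρ) * b (n - k)) :
    ∀ n : ℕ, |b n| ≤ ((n : ℝ) + 1) ^ (-ρ) := by
  refine (isLogConvex_rpow_neg hρ.le).abs_convInverse_le (fun n => by positivity) (by simp) hb0 ?_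
  intro n hn
  rw [range_eq_Ico, sum_eq_sum_Ico_succ_bot (by omega), Ico_add_one_right_eq_Icc]
  simp [hbn n hn]
end

section
/- Let α, β > 0 with α + β > 1 and (α, β) ∉ ({1} × (0,1]) ∪ ((0,1] × {1}). Then there exists a constant C(α,β) > 0 such that for all n ≥ 0, ∑_{k=0}^{n} (k+1)^{-β} (n+1-k)^{-α} ≤ C(α,β) (n+1)^{-min{α, β, α+β-1}}. -/
/-!
Write the sum as `∑_{i+j=n} (i+1)^(-β) (j+1)^(-α)`. In each term one of `i, j` is at least `n/2`,
so one factor is at most `2^α (n+1)^(-α)` or `2^β (n+1)^(-β)`, and the sum is bounded by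
`2^α (n+1)^(-α) ∑_{i≤n} (i+1)^(-β) + 2^β (n+1)^(-β) ∑_{j≤n} (j+1)^(-α)`.
Comparing with `∫ x^(-β)`, the partial sums of `(k+1)^(-β)` are `O((n+1)^e)` for every `e ≥ 0`
with `e ≥ 1 - β`, except `e = 0` when `β = 1`; with `e = α - min (min α β) (α + β - 1)` this is
exactly where the excluded boundary cases come from.
-/

open Finset

lemma sum_range_rpow_neg_le {β : ℝ} (hβ : 0 ≤ β) (hβ1 : β ≠ 1) (n : ℕ) :
    ∑ k ∈ range (n + 1), ((k : ℝ) + 1) ^ (-β) ≤ 1 + (((n : ℝ) + 1) ^ (1 - β) - 1) / (1 - β) := by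
  have hanti : AntitoneOn (fun x : ℝ => x ^ (-β)) (Set.Icc 1 (1 + n)) :=
    fun x hx y _ hxy => Real.rpow_le_rpow_of_nonpos (by linarith [hx.1]) hxy (by linarith)
  have hint := hanti.sum_le_integral
  rw [integral_rpow (Or.inr ⟨by contrapose! hβ1; linarith, by simp⟩),
    Real.one_rpow, neg_add_eq_sub, add_comm 1 (n : ℝ)] at hint
  rw [sum_range_succ', add_comm]
  gcongr
  · simp
  · exact (sum_congr rfl fun k _ => by rw [add_comm]).trans_le hint

lemma exists_sum_range_rpow_neg_le_mul_rpow {β e : ℝ} (hβ : 0 ≤ β) (he : 0 ≤ e)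
    (hβe : 1 - β ≤ e) (h1 : β = 1 → 0 < e) :
    ∃ D > 0, ∀ n : ℕ, ∑ k ∈ range (n + 1), ((k : ℝ) + 1) ^ (-β) ≤ D * ((n : ℝ) + 1) ^ e := by
  rcases le_or_gt β 1 with hb | hb
  · have he' : 0 < e := by
      rcases hb.lt_or_eq with hb | hb
      · linarith
      · exact h1 hb
    -- for `β = 1` the logarithm is absorbed by comparing with the smaller exponent `1 - e`
    set β' := max 0 (1 - e)
    have hβ'1 : β' < 1 := max_lt one_pos (by linarith)
    refine ⟨1 / (1 - β'), by bound, fun n => ?_⟩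
    have hn : (1 : ℝ) ≤ n + 1 := by simp
    calc ∑ k ∈ range (n + 1), ((k : ℝ) + 1) ^ (-β)
        ≤ ∑ k ∈ range (n + 1), ((k : ℝ) + 1) ^ (-β') := by
          gcongr with k
          · simp
          · exact max_le hβ (by linarith)
      _ ≤ 1 + (((n : ℝ) + 1) ^ (1 - β') - 1) / (1 - β') :=
          sum_range_rpow_neg_le (le_max_left _ _) hβ'1.ne n
      _ ≤ ((n : ℝ) + 1) ^ (1 - β') / (1 - β') := by
          rw [sub_div]
          linarith [one_le_one_div (by linarith : 0 < 1 - β') (by simp [β'] : 1 - β' ≤ 1)]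
      _ ≤ 1 / (1 - β') * ((n : ℝ) + 1) ^ e := by
          rw [one_div_mul_eq_div]
          gcongr
          linarith [le_max_right 0 (1 - e)]
  · refine ⟨1 + 1 / (β - 1), by have := sub_pos.2 hb; positivity, fun n => ?_⟩
    calc ∑ k ∈ range (n + 1), ((k : ℝ) + 1) ^ (-β)
        ≤ 1 + (((n : ℝ) + 1) ^ (1 - β) - 1) / (1 - β) := sum_range_rpow_neg_le hβ hb.ne' n
      _ ≤ 1 + 1 / (β - 1) := by
          rw [← neg_div_neg_eq, neg_sub, neg_sub]
          gcongr
          linarith [Real.rpow_nonneg (by positivity : (0 : ℝ) ≤ n + 1) (1 - β)]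
      _ ≤ (1 + 1 / (β - 1)) * ((n : ℝ) + 1) ^ e :=
          le_mul_of_one_le_right (by bound) (Real.one_le_rpow (by simp) he)

lemma rpow_neg_le_two_rpow_mul_rpow_neg {s x y : ℝ} (hs : 0 ≤ s) (hx : 0 < x) (hxy : x ≤ 2 * y) :
    y ^ (-s) ≤ 2 ^ s * x ^ (-s) := by
  calc y ^ (-s) ≤ (x / 2) ^ (-s) :=
        Real.rpow_le_rpow_of_nonpos (by positivity) (by linarith) (by linarith)
    _ = 2 ^ s * x ^ (-s) := by
        rw [Real.div_rpow hx.le zero_le_two, Real.rpow_neg zero_le_two, div_inv_eq_mul, mul_comm]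

lemma sum_antidiagonal_mul_le {a b : ℕ → ℝ} {n : ℕ} {A B : ℝ} (ha₀ : ∀ i, 0 ≤ a i)
    (hb₀ : ∀ j, 0 ≤ b j) (ha : ∀ i, n ≤ 2 * i → a i ≤ A) (hb : ∀ j, n ≤ 2 * j → b j ≤ B) :
    ∑ p ∈ antidiagonal n, a p.1 * b p.2
      ≤ B * ∑ i ∈ range (n + 1), a i + A * ∑ j ∈ range (n + 1), b j := by
  have hA : 0 ≤ A := (ha₀ n).trans (ha n (by omega))
  have hB : 0 ≤ B := (hb₀ n).trans (hb n (by omega))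
  calc ∑ p ∈ antidiagonal n, a p.1 * b p.2
      ≤ ∑ p ∈ antidiagonal n, (B * a p.1 + A * b p.2) := by
        refine sum_le_sum fun p hp => ?_
        rw [HasAntidiagonal.mem_antidiagonal] at hp
        rcases le_total p.1 p.2 with h | h
        · nlinarith [hb p.2 (by omega), ha₀ p.1, mul_nonneg hA (hb₀ p.2)]
        · nlinarith [ha p.1 (by omega), hb₀ p.2, mul_nonneg hB (ha₀ p.1)]
    _ = B * ∑ i ∈ range (n + 1), a i + A * ∑ j ∈ range (n + 1), b j := by
        rw [sum_add_distrib, ← mul_sum, ← mul_sum,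
          ← Nat.sum_antidiagonal_swap (f := fun p => b p.2)]
        simp only [Prod.snd_swap, Nat.sum_antidiagonal_eq_sum_range_succ_mk]

lemma sum_range_rpow_neg_mul_eq_sum_antidiagonal (α β : ℝ) (n : ℕ) :
    ∑ k ∈ range (n + 1), ((k : ℝ) + 1) ^ (-β) * ((n : ℝ) + 1 - k) ^ (-α)
      = ∑ p ∈ antidiagonal n, ((p.1 : ℝ) + 1) ^ (-β) * ((p.2 : ℝ) + 1) ^ (-α) := by
  rw [Nat.sum_antidiagonal_eq_sum_range_succ_mk]
  refine sum_congr rfl fun k hk => ?_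
  rw [Nat.cast_sub (Nat.lt_succ_iff.1 (mem_range.1 hk)), sub_add_eq_add_sub]

theorem stmt8_general (α β : ℝ) (hα : 0 < α) (hβ : 0 < β)
    (h1 : ¬(α = 1 ∧ β ≤ 1)) (h2 : ¬(β = 1 ∧ α ≤ 1)) :
    ∃ C > 0, ∀ n : ℕ,
      ∑ k ∈ Finset.range (n + 1), ((k : ℝ) + 1) ^ (-β) * ((n : ℝ) + 1 - k) ^ (-α)
        ≤ C * ((n : ℝ) + 1) ^ (-(min (min α β) (α + β - 1))) := by
  set γ := min (min α β) (α + β - 1)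
  have hγα : γ ≤ α := (min_le_left _ _).trans (min_le_left _ _)
  have hγβ : γ ≤ β := (min_le_left _ _).trans (min_le_right _ _)
  have hγ : γ ≤ α + β - 1 := min_le_right _ _
  obtain ⟨D, hD, hDβ⟩ := exists_sum_range_rpow_neg_le_mul_rpow (β := β) (e := α - γ) hβ.le
    (by linarith) (by linarith) fun hβ1 => by linarith [not_le.1 (not_and.1 h2 hβ1)]
  obtain ⟨D', hD', hDα⟩ := exists_sum_range_rpow_neg_le_mul_rpow (β := α) (e := β - γ) hα.le
    (by linarith) (by linarith) fun hα1 => by linarith [not_le.1 (not_and.1 h1 hα1)]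
  refine ⟨2 ^ α * D + 2 ^ β * D', by positivity, fun n => ?_⟩
  have hn : (0 : ℝ) < n + 1 := by positivity
  have hsplit (a b : ℝ) :
      ((n : ℝ) + 1) ^ (-a) * ((n : ℝ) + 1) ^ (a - b) = ((n : ℝ) + 1) ^ (-b) := by
    rw [← Real.rpow_add hn]
    ring_nf
  rw [sum_range_rpow_neg_mul_eq_sum_antidiagonal]
  calc _ ≤ 2 ^ α * ((n : ℝ) + 1) ^ (-α) * ∑ i ∈ range (n + 1), ((i : ℝ) + 1) ^ (-β)
        + 2 ^ β * ((n : ℝ) + 1) ^ (-β) * ∑ j ∈ range (n + 1), ((j : ℝ) + 1) ^ (-α) :=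
        sum_antidiagonal_mul_le (fun _ => by positivity) (fun _ => by positivity)
          (fun _ hj => rpow_neg_le_two_rpow_mul_rpow_neg hβ.le hn (by norm_cast; omega))
          (fun _ hj => rpow_neg_le_two_rpow_mul_rpow_neg hα.le hn (by norm_cast; omega))
    _ ≤ 2 ^ α * ((n : ℝ) + 1) ^ (-α) * (D * ((n : ℝ) + 1) ^ (α - γ))
        + 2 ^ β * ((n : ℝ) + 1) ^ (-β) * (D' * ((n : ℝ) + 1) ^ (β - γ)) := by
        gcongr
        exacts [hDβ n, hDα n]
    _ = (2 ^ α * D + 2 ^ β * D') * ((n : ℝ) + 1) ^ (-γ) := by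
        linear_combination (2 ^ α * D) * hsplit α γ + (2 ^ β * D') * hsplit β γ

theorem stmt8 (α β : ℝ) (hα : 0 < α) (hβ : 0 < β) (hαβ : 1 < α + β)
    (h1 : ¬(α = 1 ∧ β ≤ 1)) (h2 : ¬(β = 1 ∧ α ≤ 1)) :
    ∃ C > 0, ∀ n : ℕ,
      ∑ k ∈ Finset.range (n + 1), ((k : ℝ) + 1) ^ (-β) * ((n : ℝ) + 1 - k) ^ (-α)
        ≤ C * ((n : ℝ) + 1) ^ (-(min (min α β) (α + β - 1))) :=
  stmt8_general α β hα hβ h1 h2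
end

section
/- Let α = 1 and 0 < β ≤ 1. Then there exists C > 0 such that for all n ≥ 2, ∑_{k=0}^{n} (k+1)^{-β} (n+1-k)^{-1} ≤ C (n+1)^{-β} log n. -/
/-
Split each term according to which of k + 1 and n + 1 - k is larger. Their sum exceeds n + 1,
so the larger one, m, is at least (n + 1)/2, and for β ≤ 1 the term is at most m^(-β) times the
reciprocal of the smaller one. Hence every term is at most
2 (n + 1)^(-β) ((k + 1)⁻¹ + (n + 1 - k)⁻¹), and summing over k leaves twice the harmonic
number H_{n+1} ≤ 1 + log (n + 1) ≤ 4 log n.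
-/

open Finset Real

lemma rpow_neg_mul_inv_le_of_le {a b β : ℝ} (ha : 0 < a) (hab : a ≤ b) (hβ : β ≤ 1) :
    a ^ (-β) * b⁻¹ ≤ b ^ (-β) * a⁻¹ := by
  have hb : 0 < b := ha.trans_le hab
  have hpow : a ^ (1 - β) ≤ b ^ (1 - β) := rpow_le_rpow ha.le hab (by linarith)
  have hsplit : ∀ x : ℝ, 0 < x → x ^ (-β) = x ^ (1 - β) / x := fun x hx => by
    rw [← rpow_sub_one hx.ne']; ring_nf
  calc a ^ (-β) * b⁻¹ = a ^ (1 - β) * (a * b)⁻¹ := by rw [hsplit a ha]; field_simp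
    _ ≤ b ^ (1 - β) * (a * b)⁻¹ := by gcongr
    _ = b ^ (-β) * a⁻¹ := by rw [hsplit b hb]; field_simp

lemma rpow_neg_mul_inv_le {a b N β : ℝ} (ha : 0 < a) (hb : 0 < b) (hN : 0 < N)
    (hab : N ≤ a + b) (hβ0 : 0 ≤ β) (hβ1 : β ≤ 1) :
    a ^ (-β) * b⁻¹ ≤ (N / 2) ^ (-β) * (a⁻¹ + b⁻¹) := by
  rcases le_total b a with hba | hab'
  · have : a ^ (-β) ≤ (N / 2) ^ (-β) :=
      rpow_le_rpow_of_nonpos (by positivity) (by linarith) (by linarith)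
    gcongr
    linarith [inv_pos.mpr ha]
  · calc a ^ (-β) * b⁻¹ ≤ b ^ (-β) * a⁻¹ := rpow_neg_mul_inv_le_of_le ha hab' hβ1
      _ ≤ (N / 2) ^ (-β) * (a⁻¹ + b⁻¹) := by
        gcongr ?_ * ?_
        · exact rpow_le_rpow_of_nonpos (by positivity) (by linarith) (by linarith)
        · linarith [inv_pos.mpr hb]

lemma half_rpow_neg_le {N β : ℝ} (hN : 0 ≤ N) (hβ : β ≤ 1) :
    (N / 2) ^ (-β) ≤ 2 * N ^ (-β) := by
  rw [div_rpow hN zero_le_two, rpow_neg zero_le_two, div_inv_eq_mul, mul_comm]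
  gcongr
  calc (2 : ℝ) ^ β ≤ 2 ^ (1 : ℝ) := rpow_le_rpow_of_exponent_le one_le_two hβ
    _ = 2 := rpow_one 2

lemma sum_range_succ_inv_reflect (n : ℕ) :
    ∑ k ∈ range (n + 1), ((n : ℝ) + 1 - k)⁻¹ = ∑ k ∈ range (n + 1), ((k : ℝ) + 1)⁻¹ := by
  rw [← sum_range_reflect]
  refine sum_congr rfl fun k hk => ?_
  rw [Nat.add_sub_cancel, Nat.cast_sub (Nat.lt_succ_iff.mp (mem_range.mp hk))]
  ring_nf

lemma sum_range_inv_le_one_add_log (n : ℕ) :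
    ∑ k ∈ range n, ((k : ℝ) + 1)⁻¹ ≤ 1 + log n := by
  simpa [harmonic] using harmonic_le_one_add_log n

lemma one_add_log_succ_le {n : ℕ} (hn : 2 ≤ n) : 1 + log ((n : ℝ) + 1) ≤ 4 * log n := by
  have hn' : (2 : ℝ) ≤ n := by exact_mod_cast hn
  have hlog2 : 1 / 2 < log 2 := by linarith [log_two_gt_d9]
  have hlog : log 2 ≤ log n := log_le_log two_pos hn'
  have hsq : log ((n : ℝ) + 1) ≤ 2 * log n := by
    rw [show 2 * log (n : ℝ) = log ((n : ℝ) ^ 2) by rw [log_pow]; ring]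
    exact log_le_log (by positivity) (by nlinarith)
  linarith

theorem stmt9 (β : ℝ) (hβ0 : 0 < β) (hβ1 : β ≤ 1) :
    ∃ C > 0, ∀ n : ℕ, 2 ≤ n →
      ∑ k ∈ Finset.range (n + 1), ((k : ℝ) + 1) ^ (-β) * ((n : ℝ) + 1 - k) ^ (-(1 : ℝ))
        ≤ C * ((n : ℝ) + 1) ^ (-β) * Real.log n := by
  refine ⟨16, by norm_num, fun n hn => ?_⟩
  have hterm : ∀ k ∈ range (n + 1), ((k : ℝ) + 1) ^ (-β) * ((n : ℝ) + 1 - k) ^ (-(1 : ℝ))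
      ≤ (((n : ℝ) + 1) / 2) ^ (-β) * (((k : ℝ) + 1)⁻¹ + ((n : ℝ) + 1 - k)⁻¹) := by
    intro k hk
    have hkn : (k : ℝ) ≤ n := by exact_mod_cast Nat.lt_succ_iff.mp (mem_range.mp hk)
    rw [rpow_neg_one]
    exact rpow_neg_mul_inv_le (by positivity) (by linarith) (by positivity) (by linarith)
      hβ0.le hβ1
  calc _ ≤ ∑ k ∈ range (n + 1),
        (((n : ℝ) + 1) / 2) ^ (-β) * (((k : ℝ) + 1)⁻¹ + ((n : ℝ) + 1 - k)⁻¹) :=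
        sum_le_sum hterm
    _ = (((n : ℝ) + 1) / 2) ^ (-β) * (2 * ∑ k ∈ range (n + 1), ((k : ℝ) + 1)⁻¹) := by
        rw [← mul_sum, sum_add_distrib, sum_range_succ_inv_reflect]; ring
    _ ≤ (2 * ((n : ℝ) + 1) ^ (-β)) * (2 * (1 + log ((n : ℝ) + 1))) := by
        gcongr
        · exact half_rpow_neg_le (by positivity) hβ1
        · simpa using sum_range_inv_le_one_add_log (n + 1)
    _ ≤ (2 * ((n : ℝ) + 1) ^ (-β)) * (2 * (4 * log n)) := by
        gcongr
        exact one_add_log_succ_le hn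
    _ = 16 * ((n : ℝ) + 1) ^ (-β) * Real.log n := by ring
end

section
/- Let b: ℝ^d → ℝ^d be continuous satisfying ⟨x, b(x)⟩ ≤ β̃ − α̃|x|² for some β̃ ∈ ℝ, α̃ > 0, and |b(x)|² ≤ C̃(1+|x|²) for some C̃ > 0. Let σ: ℝ^d → M_d(ℝ) be bounded. Then for every 0 < h < min{√(1 + α̃/C̃) − 1, 1/α̃}, there exist γ ∈ (0,1) and C > 0 such that for all x, w ∈ ℝ^d: |x + h b(x) + σ(x) w| ≤ γ |x| + C(1 + |w|). -/
/-!
Expanding the square, the drift condition and the growth bound give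
`‖x + h b(x)‖² ≤ (1 - 2hα̃ + h²C̃) ‖x‖² + (2hβ̃ + h²C̃)`, and the step-size condition
`(1 + h)² < 1 + α̃/C̃` forces `h²C̃ < 2hα̃`, so the factor in front of `‖x‖²` is below `1`.
Taking square roots gives a contraction up to a constant; the noise term adds at most `sup ‖σ‖ · |w|`.
-/

section DriftStep

variable {E : Type*} [NormedAddCommGroup E] [InnerProductSpace ℝ E]

lemma norm_add_smul_sq_le_of_drift {α β C h : ℝ} {x v : E} (hh : 0 ≤ h)
    (hdrift : inner ℝ x v ≤ β - α * ‖x‖ ^ 2) (hgrowth : ‖v‖ ^ 2 ≤ C * (1 + ‖x‖ ^ 2)) :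
    ‖x + h • v‖ ^ 2 ≤ (1 - 2 * h * α + h ^ 2 * C) * ‖x‖ ^ 2 + (2 * h * β + h ^ 2 * C) := by
  have hexp : ‖x + h • v‖ ^ 2 = ‖x‖ ^ 2 + 2 * (h * inner ℝ x v) + h ^ 2 * ‖v‖ ^ 2 := by
    rw [norm_add_sq_real, real_inner_smul_right, norm_smul, Real.norm_eq_abs, abs_of_nonneg hh,
      mul_pow]
  have hinner := mul_le_mul_of_nonneg_left hdrift hh
  have hnorm := mul_le_mul_of_nonneg_left hgrowth (sq_nonneg h)
  rw [hexp]
  linarith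

lemma sq_mul_lt_two_mul_mul_of_lt_sqrt_sub_one {α C h : ℝ} (hC : 0 < C) (hh : 0 < h)
    (hstep : h < √(1 + α / C) - 1) : h ^ 2 * C < 2 * h * α := by
  have hsq : (h + 1) ^ 2 < 1 + α / C := (Real.lt_sqrt (by positivity)).mp (by linarith)
  have hlt : (h ^ 2 + 2 * h) * C < α := by
    rw [← lt_div_iff₀ hC]
    linarith
  nlinarith [mul_lt_mul_of_pos_left hlt (by positivity : (0 : ℝ) < 2 * h),
    mul_pos (pow_pos hh 3) hC]

lemma le_mul_add_of_sq_le {t r γ c : ℝ} (hr : 0 ≤ r) (hγ : 0 ≤ γ) (hc : 0 ≤ c)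
    (ht : t ^ 2 ≤ γ ^ 2 * r ^ 2 + c ^ 2) : t ≤ γ * r + c :=
  (le_abs_self t).trans <|
    abs_le_of_sq_le_sq (by nlinarith [mul_nonneg (mul_nonneg hγ hr) hc]) (by positivity)

lemma exists_norm_add_smul_le_of_drift {b : E → E} {α β C h : ℝ} (hh : 0 ≤ h)
    (hdrift : ∀ x, inner ℝ x (b x) ≤ β - α * ‖x‖ ^ 2)
    (hgrowth : ∀ x, ‖b x‖ ^ 2 ≤ C * (1 + ‖x‖ ^ 2)) (hcontr : h ^ 2 * C < 2 * h * α) :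
    ∃ γ ∈ Set.Ioo (0 : ℝ) 1, ∃ c ≥ 0, ∀ x, ‖x + h • b x‖ ≤ γ * ‖x‖ + c := by
  set K := 1 - 2 * h * α + h ^ 2 * C
  set B := 2 * h * β + h ^ 2 * C
  have hK : max K (1 / 2) < 1 := max_lt (by linarith) (by norm_num)
  have hKpos : 0 < max K (1 / 2) := lt_max_of_lt_right (by norm_num)
  refine ⟨√(max K (1 / 2)), ⟨Real.sqrt_pos.mpr hKpos, (Real.sqrt_lt' one_pos).mpr (by simpa using hK)⟩,
    √(max B 0), Real.sqrt_nonneg _, fun x => ?_⟩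
  refine le_mul_add_of_sq_le (norm_nonneg x) (Real.sqrt_nonneg _) (Real.sqrt_nonneg _) ?_
  rw [Real.sq_sqrt hKpos.le, Real.sq_sqrt (le_max_right _ _)]
  have hsq := norm_add_smul_sq_le_of_drift hh (hdrift x) (hgrowth x)
  nlinarith [le_max_left K (1 / 2), le_max_left B 0, sq_nonneg ‖x‖]

end DriftStep

theorem stmt13_general (d : ℕ) (b : EuclideanSpace ℝ (Fin d) → EuclideanSpace ℝ (Fin d))
    (σ : EuclideanSpace ℝ (Fin d) →
      (EuclideanSpace ℝ (Fin d) →L[ℝ] EuclideanSpace ℝ (Fin d)))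
    (β' α' : ℝ)
    (hdrift : ∀ x, (inner ℝ x (b x) : ℝ) ≤ β' - α' * ‖x‖ ^ 2)
    (C' : ℝ) (hC' : 0 < C') (hgrowth : ∀ x, ‖b x‖ ^ 2 ≤ C' * (1 + ‖x‖ ^ 2))
    (Mσ : ℝ) (hσ : ∀ x, ‖σ x‖ ≤ Mσ)
    (h : ℝ) (hh0 : 0 < h)
    (hh : h < min (Real.sqrt (1 + α' / C') - 1) (1 / α')) :
    ∃ γ ∈ Set.Ioo (0 : ℝ) 1, ∃ C > 0, ∀ x w,
      ‖x + h • b x + σ x w‖ ≤ γ * ‖x‖ + C * (1 + ‖w‖) := by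
  have hcontr := sq_mul_lt_two_mul_mul_of_lt_sqrt_sub_one hC' hh0 (hh.trans_le (min_le_left _ _))
  obtain ⟨γ, hγ, c, hc, hdriftStep⟩ :=
    exists_norm_add_smul_le_of_drift hh0.le hdrift hgrowth hcontr
  set M := max Mσ 0
  refine ⟨γ, hγ, c + M + 1, by positivity, fun x w => ?_⟩
  have hnoise : ‖σ x w‖ ≤ M * ‖w‖ := (σ x).le_of_opNorm_le ((hσ x).trans (le_max_left _ _)) w
  have hw := norm_nonneg w
  calc ‖x + h • b x + σ x w‖ ≤ ‖x + h • b x‖ + ‖σ x w‖ := norm_add_le _ _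
    _ ≤ γ * ‖x‖ + c + M * ‖w‖ := add_le_add (hdriftStep x) hnoise
    _ ≤ γ * ‖x‖ + (c + M + 1) * (1 + ‖w‖) := by
        nlinarith [mul_nonneg hc hw, le_max_right Mσ 0]

theorem stmt13 (d : ℕ) (b : EuclideanSpace ℝ (Fin d) → EuclideanSpace ℝ (Fin d))
    (σ : EuclideanSpace ℝ (Fin d) →
      (EuclideanSpace ℝ (Fin d) →L[ℝ] EuclideanSpace ℝ (Fin d)))
    (hb_cont : Continuous b)
    (β' α' : ℝ) (hα' : 0 < α')
    (hdrift : ∀ x, (inner ℝ x (b x) : ℝ) ≤ β' - α' * ‖x‖ ^ 2)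
    (C' : ℝ) (hC' : 0 < C') (hgrowth : ∀ x, ‖b x‖ ^ 2 ≤ C' * (1 + ‖x‖ ^ 2))
    (Mσ : ℝ) (hσ : ∀ x, ‖σ x‖ ≤ Mσ)
    (h : ℝ) (hh0 : 0 < h)
    (hh : h < min (Real.sqrt (1 + α' / C') - 1) (1 / α')) :
    ∃ γ ∈ Set.Ioo (0 : ℝ) 1, ∃ C > 0, ∀ x w,
      ‖x + h • b x + σ x w‖ ≤ γ * ‖x‖ + C * (1 + ‖w‖) :=
  stmt13_general d b σ β' α' hdrift C' hC' hgrowth Mσ hσ h hh0 hh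
end

section
/- Let a ∈ ℝ and b ∈ (0,1) with |a| ≤ b, and let μ = N(0,1). Then there exists a probability measure ν on ℝ² with both marginals equal to μ such that ν({(x,y) : y = x + a}) ≥ 1 − b and ν({(x,y) : |y − x| ≤ M_b}) = 1, where M_b = max(4b, −2 log(b/8)). -/
/-!
For `0 ≤ a ≤ c`, cut the standard Gaussian density `φ` into four pieces and move each along
the graph of a measure-preserving map of `ℝ`: the overlap `min (φ x) (φ (x + a))` on `[-c, c]`
along `x ↦ x + a`, the tails `x < -c` and `x > c + a` along the identity, the excess
`φ x - φ (x + a)` on `[-a/2, c]` along `x ↦ -x`, and the gap `(c, c + a]` along `x ↦ a - x`.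
Both the pieces and their images add up to `φ` (the reflected excess and gap fill exactly what
the shifted overlap leaves free on `[-c, a/2]`), so both marginals are standard Gaussian, and no
point moves by more than `2c + a`. Everything off the shifted diagonal is the tails, of mass at
most `exp (-c²/2)` by Mills' ratio, plus the excess and the gap, of total mass
`∫_{-a/2}^{a/2} φ ≤ a/2`. Taking `2c + |a| = max (4b) (-2 log (b/8))` makes this at most `b`;
a negative shift is reduced to a positive one by swapping the coordinates.
-/

open MeasureTheory ProbabilityTheory Real Set Filter Topology
open scoped ENNReal NNReal

local notation "φ" => gaussianPDFReal 0 1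

lemma gaussianPDFReal_le_of_sq_le (μ : ℝ) (v : ℝ≥0) {x y : ℝ}
    (h : (y - μ) ^ 2 ≤ (x - μ) ^ 2) :
    gaussianPDFReal μ v x ≤ gaussianPDFReal μ v y := by
  unfold gaussianPDFReal
  gcongr

lemma gaussianPDFReal_zero_neg (v : ℝ≥0) (x : ℝ) :
    gaussianPDFReal 0 v (-x) = gaussianPDFReal 0 v x := by
  simp [gaussianPDFReal]

lemma min_gaussianPDFReal_zero_add_eq_left (v : ℝ≥0) {a x : ℝ} (ha : 0 ≤ a)
    (hx : x ≤ -(a / 2)) :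
    min (gaussianPDFReal 0 v x) (gaussianPDFReal 0 v (x + a)) = gaussianPDFReal 0 v x :=
  min_eq_left (gaussianPDFReal_le_of_sq_le 0 v (by nlinarith))

lemma min_gaussianPDFReal_zero_add_eq_right (v : ℝ≥0) {a x : ℝ} (ha : 0 ≤ a)
    (hx : -(a / 2) ≤ x) :
    min (gaussianPDFReal 0 v x) (gaussianPDFReal 0 v (x + a)) = gaussianPDFReal 0 v (x + a) :=
  min_eq_right (gaussianPDFReal_le_of_sq_le 0 v (by nlinarith))

lemma gaussianPDFReal_zero_one_apply (x : ℝ) : φ x = (√(2 * π))⁻¹ * rexp (-x ^ 2 / 2) := by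
  simp [gaussianPDFReal]

lemma gaussianPDFReal_zero_one_le (x : ℝ) : φ x ≤ 2⁻¹ * rexp (-x ^ 2 / 2) := by
  have h2π : (2 : ℝ) ≤ √(2 * π) := Real.le_sqrt_of_sq_le (by nlinarith [pi_gt_three])
  rw [gaussianPDFReal_zero_one_apply]
  gcongr

lemma gaussianPDFReal_zero_one_le_half (x : ℝ) : φ x ≤ 2⁻¹ :=
  (gaussianPDFReal_zero_one_le x).trans <|
    mul_le_of_le_one_right (by norm_num) (exp_le_one_iff.2 (by nlinarith [sq_nonneg x]))

lemma intervalIntegral_gaussianPDFReal_zero_one_le {a b : ℝ} (hab : a ≤ b) :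
    ∫ x in a..b, φ x ≤ (b - a) / 2 := by
  have h := intervalIntegral.norm_integral_le_of_norm_le_const (a := a) (b := b) fun x _ =>
    (Real.norm_of_nonneg (gaussianPDFReal_nonneg 0 1 x)).trans_le
      (gaussianPDFReal_zero_one_le_half x)
  rw [Real.norm_eq_abs, abs_of_nonneg (sub_nonneg.2 hab)] at h
  linarith [le_abs_self (∫ x in a..b, φ x)]

lemma hasDerivAt_gaussianPDFReal_zero_one (x : ℝ) : HasDerivAt φ (-(x * φ x)) x := by
  have h : HasDerivAt (fun x : ℝ => -x ^ 2 / 2) (-x) x :=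
    ((hasDerivAt_pow 2 x).neg.div_const 2).congr_deriv (by ring)
  rw [funext gaussianPDFReal_zero_one_apply]
  exact (h.exp.const_mul (√(2 * π))⁻¹).congr_deriv (by ring)

lemma tendsto_gaussianPDFReal_zero_one_atTop : Tendsto φ atTop (𝓝 0) := by
  have h : Tendsto (fun x : ℝ => -x ^ 2 / 2) atTop atBot :=
    (tendsto_neg_atBot_iff.2 (tendsto_pow_atTop two_ne_zero)).atBot_div_const two_pos
  simpa [funext gaussianPDFReal_zero_one_apply] using
    (tendsto_exp_atBot.comp h).const_mul (√(2 * π))⁻¹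

/-- Mills' ratio bound: `φ x ≤ x φ x / c` on `(c, ∞)`, and `-φ` is a primitive of `x φ x`. -/
lemma setIntegral_Ioi_gaussianPDFReal_zero_one_le {c : ℝ} (hc : 0 < c) :
    ∫ x in Ioi c, φ x ≤ φ c / c := by
  have hderiv : ∀ x ∈ Ioi c, HasDerivAt (fun x => -φ x) (x * φ x) x := fun x _ =>
    (hasDerivAt_gaussianPDFReal_zero_one x).neg.congr_deriv (neg_neg _)
  have hcont : ContinuousWithinAt (fun x => -φ x) (Ici c) c :=
    (hasDerivAt_gaussianPDFReal_zero_one c).continuousAt.neg.continuousWithinAt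
  have hpos : ∀ x ∈ Ioi c, 0 ≤ x * φ x := fun x hx =>
    mul_nonneg (hc.trans hx).le (gaussianPDFReal_nonneg 0 1 x)
  have hlim : Tendsto (fun x => -φ x) atTop (𝓝 0) := by
    simpa using tendsto_gaussianPDFReal_zero_one_atTop.neg
  have hint := integrableOn_Ioi_deriv_of_nonneg hcont hderiv hpos hlim
  calc ∫ x in Ioi c, φ x ≤ ∫ x in Ioi c, x * φ x / c := by
        refine setIntegral_mono_on (integrable_gaussianPDFReal 0 1).integrableOn
          (hint.div_const c) measurableSet_Ioi fun x hx => ?_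
        rw [le_div_iff₀ hc, mul_comm x]
        exact mul_le_mul_of_nonneg_left (le_of_lt hx) (gaussianPDFReal_nonneg 0 1 x)
    _ = φ c / c := by
        rw [integral_div, integral_Ioi_of_hasDerivAt_of_nonneg hcont hderiv hpos hlim]
        ring

lemma setIntegral_Ioi_gaussianPDFReal_zero_one_le_exp {c : ℝ} (hc : 1 ≤ c) :
    ∫ x in Ioi c, φ x ≤ 2⁻¹ * rexp (-c ^ 2 / 2) :=
  calc ∫ x in Ioi c, φ x ≤ φ c / c := setIntegral_Ioi_gaussianPDFReal_zero_one_le (by linarith)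
    _ ≤ φ c := div_le_self (gaussianPDFReal_nonneg 0 1 c) hc
    _ ≤ 2⁻¹ * rexp (-c ^ 2 / 2) := gaussianPDFReal_zero_one_le c

lemma setIntegral_Iio_neg_gaussianPDFReal_zero (v : ℝ≥0) (c : ℝ) :
    ∫ x in Iio (-c), gaussianPDFReal 0 v x = ∫ x in Ioi c, gaussianPDFReal 0 v x := by
  rw [← integral_Iic_eq_integral_Iio, ← integral_comp_neg_Ioi]
  simp only [gaussianPDFReal_zero_neg]

lemma MeasureTheory.MeasurePreserving.map_withDensity_comp {α β : Type*} [MeasurableSpace α]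
    [MeasurableSpace β] {μ : Measure α} {ν : Measure β} {T : α → β}
    (hT : MeasurePreserving T μ ν) {f : β → ℝ≥0∞} (hf : Measurable f) :
    (μ.withDensity (f ∘ T)).map T = ν.withDensity f := by
  ext s hs
  rw [Measure.map_apply hT.measurable hs, withDensity_apply _ (hT.measurable hs),
    withDensity_apply _ hs]
  exact hT.setLIntegral_comp_preimage hs hf

lemma withDensity_ofReal_add_eq_gaussianReal {f₁ f₂ f₃ f₄ : ℝ → ℝ} (hf₁ : Measurable f₁)
    (hf₂ : Measurable f₂) (hf₃ : Measurable f₃) (h₁ : ∀ x, 0 ≤ f₁ x) (h₂ : ∀ x, 0 ≤ f₂ x)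
    (h₃ : ∀ x, 0 ≤ f₃ x) (h₄ : ∀ x, 0 ≤ f₄ x) (h : ∀ x, f₁ x + f₂ x + f₃ x + f₄ x = φ x) :
    volume.withDensity (fun x => ENNReal.ofReal (f₁ x))
      + volume.withDensity (fun x => ENNReal.ofReal (f₂ x))
      + volume.withDensity (fun x => ENNReal.ofReal (f₃ x))
      + volume.withDensity (fun x => ENNReal.ofReal (f₄ x)) = gaussianReal 0 1 := by
  rw [← withDensity_add_left (by fun_prop), ← withDensity_add_left (by fun_prop),
    ← withDensity_add_left (by fun_prop), gaussianReal_of_var_ne_zero 0 one_ne_zero]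
  congr with x
  simp only [Pi.add_apply, gaussianPDF, ← h x]
  rw [ENNReal.ofReal_add (by linarith [h₁ x, h₂ x, h₃ x]) (h₄ x),
    ENNReal.ofReal_add (by linarith [h₁ x, h₂ x]) (h₃ x), ENNReal.ofReal_add (h₁ x) (h₂ x)]

noncomputable def graphMeasure (f g : ℝ → ℝ) : Measure (ℝ × ℝ) :=
  (volume.withDensity fun x => ENNReal.ofReal (f x)).map fun x => (x, g x)

section graphMeasure

variable {f g : ℝ → ℝ}

lemma graphMeasure_fst (hg : Measurable g) :
    (graphMeasure f g).fst = volume.withDensity fun x => ENNReal.ofReal (f x) := by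
  rw [graphMeasure, Measure.fst, Measure.map_map measurable_fst (measurable_id'.prodMk hg)]
  exact Measure.map_id

lemma graphMeasure_snd {S : ℝ → ℝ} (hf : Measurable f) (hg : MeasurePreserving g)
    (hS : Measurable S) (hSg : ∀ x, S (g x) = x) :
    (graphMeasure f g).snd = volume.withDensity fun y => ENNReal.ofReal (f (S y)) := by
  have hfg : (fun x => ENNReal.ofReal (f x)) = (fun y => ENNReal.ofReal (f (S y))) ∘ g :=
    funext fun x => by simp only [Function.comp_apply, hSg]
  rw [graphMeasure, Measure.snd,
    Measure.map_map measurable_snd (measurable_id'.prodMk hg.measurable), hfg]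
  exact hg.map_withDensity_comp (hf.comp hS).ennreal_ofReal

lemma lintegral_le_graphMeasure_graph (hg : Measurable g) :
    ∫⁻ x, ENNReal.ofReal (f x) ≤ graphMeasure f g {p | p.2 = g p.1} := by
  refine (Measure.le_map_apply (measurable_id'.prodMk hg).aemeasurable _).trans_eq' ?_
  simp

lemma ae_graphMeasure {P : ℝ × ℝ → Prop} (hf : Measurable f) (hg : Measurable g)
    (hP : MeasurableSet {p | P p}) (h : ∀ x ∈ Function.support f, P (x, g x)) :
    ∀ᵐ p ∂graphMeasure f g, P p := by
  rw [graphMeasure, ae_map_iff (measurable_id'.prodMk hg).aemeasurable hP,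
    ae_withDensity_iff hf.ennreal_ofReal]
  exact ae_of_all _ fun x hx => h x fun h0 => hx (by simp [h0])

end graphMeasure

noncomputable section

def overlapDensity (a c : ℝ) : ℝ → ℝ := (Icc (-c) c).indicator fun x => min (φ x) (φ (x + a))
def tailDensity (a c : ℝ) : ℝ → ℝ := (Iio (-c) ∪ Ioi (c + a)).indicator φ
def reflectDensity (a c : ℝ) : ℝ → ℝ := (Icc (-(a / 2)) c).indicator fun x => φ x - φ (x + a)
def gapDensity (a c : ℝ) : ℝ → ℝ := (Ioc c (c + a)).indicator φ

def shiftCoupling (a c : ℝ) : Measure (ℝ × ℝ) :=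
  graphMeasure (overlapDensity a c) (· + a) + graphMeasure (tailDensity a c) id
    + graphMeasure (reflectDensity a c) Neg.neg + graphMeasure (gapDensity a c) (a - ·)

end

section shiftCoupling

variable {a c : ℝ}

lemma overlapDensity_add_tailDensity_add_reflectDensity_add_gapDensity (ha : 0 ≤ a)
    (hac : a ≤ c) (x : ℝ) :
    overlapDensity a c x + tailDensity a c x + reflectDensity a c x + gapDensity a c x = φ x := by
  have hl := fun h => min_gaussianPDFReal_zero_add_eq_left 1 ha (x := x) h
  have hr := fun h => min_gaussianPDFReal_zero_add_eq_right 1 ha (x := x) h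
  simp only [overlapDensity, tailDensity, reflectDensity, gapDensity, indicator_apply, mem_Icc,
    mem_union, mem_Iio, mem_Ioi, mem_Ioc]
  -- one case per interval cut out by `-c`, `-a/2`, `c`, `c + a`
  split_ifs <;> grind

lemma overlapDensity_sub_add_tailDensity_add_reflectDensity_neg_add_gapDensity_sub
    (ha : 0 ≤ a) (hac : a ≤ c) (y : ℝ) :
    overlapDensity a c (y - a) + tailDensity a c y + reflectDensity a c (-y)
      + gapDensity a c (a - y) = φ y := by
  have hl := fun h => min_gaussianPDFReal_zero_add_eq_left 1 ha (x := y - a) h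
  have hr := fun h => min_gaussianPDFReal_zero_add_eq_right 1 ha (x := y - a) h
  have e1 := gaussianPDFReal_zero_neg 1 y
  have e2 : φ (-y + a) = φ (y - a) := by rw [neg_add_eq_sub, ← neg_sub, gaussianPDFReal_zero_neg]
  have e3 : φ (a - y) = φ (y - a) := by rw [← neg_sub, gaussianPDFReal_zero_neg]
  simp only [overlapDensity, tailDensity, reflectDensity, gapDensity, indicator_apply, mem_Icc,
    mem_union, mem_Iio, mem_Ioi, mem_Ioc, sub_add_cancel]
  -- one case per interval cut out by `-c`, `a - c`, `a/2`, `c + a`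
  split_ifs <;> grind

lemma measurable_overlapDensity : Measurable (overlapDensity a c) := by
  unfold overlapDensity; fun_prop (disch := measurability)

lemma measurable_tailDensity : Measurable (tailDensity a c) := by
  unfold tailDensity; fun_prop (disch := measurability)

lemma measurable_reflectDensity : Measurable (reflectDensity a c) := by
  unfold reflectDensity; fun_prop (disch := measurability)

lemma measurable_gapDensity : Measurable (gapDensity a c) := by
  unfold gapDensity; fun_prop (disch := measurability)

lemma integrable_overlapDensity : Integrable (overlapDensity a c) :=
  ((integrable_gaussianPDFReal 0 1).inf
    ((integrable_gaussianPDFReal 0 1).comp_add_right a)).indicator measurableSet_Icc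

lemma integrable_tailDensity : Integrable (tailDensity a c) :=
  (integrable_gaussianPDFReal 0 1).indicator (measurableSet_Iio.union measurableSet_Ioi)

lemma integrable_reflectDensity : Integrable (reflectDensity a c) :=
  ((integrable_gaussianPDFReal 0 1).sub
    ((integrable_gaussianPDFReal 0 1).comp_add_right a)).indicator measurableSet_Icc

lemma integrable_gapDensity : Integrable (gapDensity a c) :=
  (integrable_gaussianPDFReal 0 1).indicator measurableSet_Ioc

lemma overlapDensity_nonneg : 0 ≤ overlapDensity a c :=
  indicator_nonneg fun x _ =>
    le_min (gaussianPDFReal_nonneg 0 1 x) (gaussianPDFReal_nonneg 0 1 _)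

lemma tailDensity_nonneg : 0 ≤ tailDensity a c :=
  indicator_nonneg fun x _ => gaussianPDFReal_nonneg 0 1 x

lemma reflectDensity_nonneg (ha : 0 ≤ a) : 0 ≤ reflectDensity a c :=
  indicator_nonneg fun x hx => by
    rw [← min_gaussianPDFReal_zero_add_eq_right 1 ha hx.1, sub_nonneg]
    exact min_le_left _ _

lemma gapDensity_nonneg : 0 ≤ gapDensity a c :=
  indicator_nonneg fun x _ => gaussianPDFReal_nonneg 0 1 x

lemma shiftCoupling_fst (ha : 0 ≤ a) (hac : a ≤ c) :
    (shiftCoupling a c).fst = gaussianReal 0 1 := by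
  simp only [shiftCoupling, Measure.fst_add]
  rw [graphMeasure_fst (measurable_add_const a), graphMeasure_fst measurable_id,
    graphMeasure_fst measurable_neg, graphMeasure_fst (g := (a - ·)) (by fun_prop)]
  exact withDensity_ofReal_add_eq_gaussianReal measurable_overlapDensity measurable_tailDensity
    measurable_reflectDensity overlapDensity_nonneg tailDensity_nonneg (reflectDensity_nonneg ha)
    gapDensity_nonneg (overlapDensity_add_tailDensity_add_reflectDensity_add_gapDensity ha hac)

lemma shiftCoupling_snd (ha : 0 ≤ a) (hac : a ≤ c) :
    (shiftCoupling a c).snd = gaussianReal 0 1 := by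
  simp only [shiftCoupling, Measure.snd_add]
  rw [graphMeasure_snd measurable_overlapDensity (measurePreserving_add_right volume a)
      (measurable_sub_const a) (add_sub_cancel_right · a),
    graphMeasure_snd measurable_tailDensity (MeasurePreserving.id volume) measurable_id
      (fun _ => rfl),
    graphMeasure_snd measurable_reflectDensity (Measure.measurePreserving_neg volume)
      measurable_neg neg_neg,
    graphMeasure_snd measurable_gapDensity (Measure.measurePreserving_sub_left volume a)
      (measurable_const_sub a) (sub_sub_cancel a)]
  exact withDensity_ofReal_add_eq_gaussianReal
    (measurable_overlapDensity.comp (measurable_sub_const a)) measurable_tailDensity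
    (measurable_reflectDensity.comp measurable_neg) (fun _ => overlapDensity_nonneg _)
    tailDensity_nonneg (fun _ => reflectDensity_nonneg ha _) (fun _ => gapDensity_nonneg _)
    (overlapDensity_sub_add_tailDensity_add_reflectDensity_neg_add_gapDensity_sub ha hac)

lemma integral_tailDensity_le (ha : 0 ≤ a) (hc : 1 ≤ c) :
    ∫ x, tailDensity a c x ≤ rexp (-c ^ 2 / 2) := by
  have hφ := integrable_gaussianPDFReal 0 1
  have hdisj : Disjoint (Iio (-c)) (Ioi (c + a)) :=
    disjoint_left.2 fun x h₁ h₂ => by simp only [mem_Iio, mem_Ioi] at h₁ h₂; linarith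
  have hmono : ∫ x in Ioi (c + a), φ x ≤ ∫ x in Ioi c, φ x :=
    setIntegral_mono_set hφ.integrableOn (ae_of_all _ (gaussianPDFReal_nonneg 0 1))
      (Ioi_subset_Ioi (by linarith)).eventuallyLE
  rw [tailDensity, integral_indicator (measurableSet_Iio.union measurableSet_Ioi),
    setIntegral_union hdisj measurableSet_Ioi hφ.integrableOn hφ.integrableOn,
    setIntegral_Iio_neg_gaussianPDFReal_zero]
  linarith [setIntegral_Ioi_gaussianPDFReal_zero_one_le_exp hc]

lemma integral_reflectDensity_add_integral_gapDensity (ha : 0 ≤ a) (hac : a ≤ c) :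
    (∫ x, reflectDensity a c x) + ∫ x, gapDensity a c x = ∫ x in -(a / 2)..a / 2, φ x := by
  have hφ : ∀ u v : ℝ, IntervalIntegrable φ volume u v :=
    fun u v => (integrable_gaussianPDFReal 0 1).intervalIntegrable
  have hreflect : ∫ x, reflectDensity a c x
      = (∫ x in -(a / 2)..c, φ x) - ∫ x in a / 2..c + a, φ x := by
    rw [reflectDensity, integral_indicator measurableSet_Icc, integral_Icc_eq_integral_Ioc,
      ← intervalIntegral.integral_of_le (by linarith), intervalIntegral.integral_sub (hφ _ _)
        ((integrable_gaussianPDFReal 0 1).comp_add_right a).intervalIntegrable,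
      intervalIntegral.integral_comp_add_right, show -(a / 2) + a = a / 2 by ring]
  have hgap : ∫ x, gapDensity a c x = ∫ x in c..c + a, φ x := by
    rw [gapDensity, integral_indicator measurableSet_Ioc,
      ← intervalIntegral.integral_of_le (by linarith)]
  rw [hreflect, hgap,
    ← intervalIntegral.integral_add_adjacent_intervals (hφ (-(a / 2)) (a / 2)) (hφ (a / 2) c),
    ← intervalIntegral.integral_add_adjacent_intervals (hφ (a / 2) c) (hφ c (c + a))]
  ring

lemma one_sub_le_integral_overlapDensity (ha : 0 ≤ a) (hac : a ≤ c) (hc : 1 ≤ c) :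
    1 - rexp (-c ^ 2 / 2) - a / 2 ≤ ∫ x, overlapDensity a c x := by
  have htotal : (∫ x, overlapDensity a c x) + (∫ x, tailDensity a c x)
      + (∫ x, reflectDensity a c x) + ∫ x, gapDensity a c x = 1 := by
    have hsum := overlapDensity_add_tailDensity_add_reflectDensity_add_gapDensity ha hac
    rw [← integral_gaussianPDFReal_eq_one 0 one_ne_zero, ← integral_congr_ae (ae_of_all _ hsum),
      integral_add (f := fun x => overlapDensity a c x + tailDensity a c x + reflectDensity a c x)
        ((integrable_overlapDensity.add integrable_tailDensity).add integrable_reflectDensity)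
        integrable_gapDensity,
      integral_add (f := fun x => overlapDensity a c x + tailDensity a c x)
        (integrable_overlapDensity.add integrable_tailDensity) integrable_reflectDensity,
      integral_add integrable_overlapDensity integrable_tailDensity]
  have hcentre := intervalIntegral_gaussianPDFReal_zero_one_le (a := -(a / 2)) (b := a / 2)
    (by linarith)
  linarith [integral_tailDensity_le ha hc, integral_reflectDensity_add_integral_gapDensity ha hac]

lemma ofReal_integral_overlapDensity_le_shiftCoupling :
    ENNReal.ofReal (∫ x, overlapDensity a c x) ≤ shiftCoupling a c {p | p.2 = p.1 + a} := by
  rw [ofReal_integral_eq_lintegral_ofReal integrable_overlapDensity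
    (ae_of_all _ overlapDensity_nonneg)]
  refine (lintegral_le_graphMeasure_graph (measurable_add_const a)).trans ?_
  simp only [shiftCoupling, Measure.coe_add, Pi.add_apply]
  exact le_add_right (le_add_right (le_add_right le_rfl))

lemma ae_shiftCoupling_abs_sub_le (ha : 0 ≤ a) (hac : a ≤ c) :
    ∀ᵐ p ∂shiftCoupling a c, |p.2 - p.1| ≤ 2 * c + a := by
  have hP : MeasurableSet {p : ℝ × ℝ | |p.2 - p.1| ≤ 2 * c + a} :=
    measurableSet_le (by fun_prop) measurable_const
  simp only [shiftCoupling, ae_add_measure_iff]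
  refine ⟨⟨⟨?_, ?_⟩, ?_⟩, ?_⟩
  · refine ae_graphMeasure measurable_overlapDensity (measurable_add_const a) hP fun x _ => ?_
    simp only [add_sub_cancel_left, abs_of_nonneg ha]
    linarith
  · refine ae_graphMeasure measurable_tailDensity measurable_id hP fun x _ => ?_
    simp only [id, sub_self, abs_zero]
    linarith
  · refine ae_graphMeasure measurable_reflectDensity measurable_neg hP fun x hx => ?_
    obtain ⟨h₁, h₂⟩ : x ∈ Icc (-(a / 2)) c := support_indicator_subset hx
    simp only [abs_le]
    constructor <;> linarith
  · refine ae_graphMeasure measurable_gapDensity (g := (a - ·)) (by fun_prop) hP fun x hx => ?_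
    obtain ⟨h₁, h₂⟩ : x ∈ Ioc c (c + a) := support_indicator_subset hx
    simp only [abs_le]
    constructor <;> linarith

end shiftCoupling

theorem exists_gaussian_coupling_shift_of_nonneg {a c : ℝ} (ha : 0 ≤ a) (hac : a ≤ c)
    (hc : 1 ≤ c) :
    ∃ ν : Measure (ℝ × ℝ), ν.fst = gaussianReal 0 1 ∧ ν.snd = gaussianReal 0 1 ∧
      ENNReal.ofReal (1 - rexp (-c ^ 2 / 2) - a / 2) ≤ ν {p | p.2 = p.1 + a} ∧
      ∀ᵐ p ∂ν, |p.2 - p.1| ≤ 2 * c + a :=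
  ⟨shiftCoupling a c, shiftCoupling_fst ha hac, shiftCoupling_snd ha hac,
    (ENNReal.ofReal_le_ofReal (one_sub_le_integral_overlapDensity ha hac hc)).trans
      ofReal_integral_overlapDensity_le_shiftCoupling,
    ae_shiftCoupling_abs_sub_le ha hac⟩

theorem exists_gaussian_coupling_shift {a c : ℝ} (hac : |a| ≤ c) (hc : 1 ≤ c) :
    ∃ ν : Measure (ℝ × ℝ), ν.fst = gaussianReal 0 1 ∧ ν.snd = gaussianReal 0 1 ∧
      ENNReal.ofReal (1 - rexp (-c ^ 2 / 2) - |a| / 2) ≤ ν {p | p.2 = p.1 + a} ∧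
      ∀ᵐ p ∂ν, |p.2 - p.1| ≤ 2 * c + |a| := by
  rcases le_or_gt 0 a with ha | ha
  · rw [abs_of_nonneg ha] at hac ⊢
    exact exists_gaussian_coupling_shift_of_nonneg ha hac hc
  rw [abs_of_neg ha] at hac ⊢
  obtain ⟨ν, hfst, hsnd, hdiag, hband⟩ :=
    exists_gaussian_coupling_shift_of_nonneg (neg_nonneg.2 ha.le) hac hc
  refine ⟨ν.map Prod.swap, by rwa [Measure.fst_map_swap], by rwa [Measure.snd_map_swap], ?_, ?_⟩
  · rw [Measure.map_apply measurable_swap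
      (measurableSet_eq_fun measurable_snd (measurable_fst.add_const a))]
    convert hdiag using 2
    ext p
    simp only [mem_preimage, Prod.fst_swap, Prod.snd_swap, mem_ofPred_eq]
    constructor <;> intro h <;> linarith
  · rw [ae_map_iff measurable_swap.aemeasurable (measurableSet_le (by fun_prop) measurable_const)]
    filter_upwards [hband] with p hp
    rwa [Prod.fst_swap, Prod.snd_swap, abs_sub_comm]

lemma three_halves_sub_log_le {a b : ℝ} (hb : b ∈ Ioo (0 : ℝ) 1) (ha : |a| ≤ b) :
    3 / 2 - log b ≤ (max (4 * b) (-2 * log (b / 8)) - |a|) / 2 := by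
  have hlog : log (b / 8) = log b - 3 * log 2 := by
    rw [log_div hb.1.ne' (by norm_num), show (8 : ℝ) = 2 ^ 3 by norm_num, log_pow]
    push_cast; ring
  have := le_max_right (4 * b) (-2 * log (b / 8))
  linarith [log_two_gt_d9, hb.2]

lemma exp_neg_sq_div_two_le {b c : ℝ} (hb : b ∈ Ioo (0 : ℝ) 1) (hc : 3 / 2 - log b ≤ c) :
    rexp (-c ^ 2 / 2) ≤ b / 2 := by
  have hlogb : log b < 0 := log_neg hb.1 hb.2
  rw [← exp_log (half_pos hb.1), log_div hb.1.ne' two_ne_zero, exp_le_exp]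
  nlinarith [log_two_lt_d9]

theorem stmt17 (a b : ℝ) (hb : b ∈ Set.Ioo (0 : ℝ) 1) (ha : |a| ≤ b) :
    ∃ ν : Measure (ℝ × ℝ),
      IsProbabilityMeasure ν ∧
      ν.map Prod.fst = ProbabilityTheory.gaussianReal 0 1 ∧
      ν.map Prod.snd = ProbabilityTheory.gaussianReal 0 1 ∧
      ENNReal.ofReal (1 - b) ≤ ν {p | p.2 = p.1 + a} ∧
      ν {p | |p.2 - p.1| ≤ max (4 * b) (-2 * Real.log (b / 8))} = 1 := by
  have hc := three_halves_sub_log_le hb ha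
  have hlogb : log b < 0 := log_neg hb.1 hb.2
  obtain ⟨ν, hfst, hsnd, hdiag, hband⟩ := exists_gaussian_coupling_shift (a := a)
    (c := (max (4 * b) (-2 * log (b / 8)) - |a|) / 2) (by linarith [hb.2]) (by linarith)
  have hprob : IsProbabilityMeasure ν := ⟨by rw [← Measure.fst_univ, hfst]; exact measure_univ⟩
  refine ⟨ν, hprob, hfst, hsnd, ?_, ?_⟩
  · refine le_trans (ENNReal.ofReal_le_ofReal ?_) hdiag
    linarith [exp_neg_sq_div_two_le hb hc]
  · rw [← measure_univ (μ := ν),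
      ← ae_iff_measure_eq (measurableSet_le (by fun_prop) measurable_const).nullMeasurableSet]
    filter_upwards [hband] with p hp
    linarith
end
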